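/- arXiv:1801.07191 — 3 statements merged into one kernel-verified Lean document; each statement's English description precedes it below -/
import Mathlib

section
/- Let X be a pre-Riesz space with vector lattice cover (Y, i) and let I ⊆ X be an ideal. Then I is directed if and only if i(I) is majorizing in the ideal 𝓘_{i(I)} generated by i(I) in Y. -/
open Set

section Defs

variable {Z : Type*} [AddCommGroup Z] [PartialOrder Z] [Module ℝ Z]

/-- Set of common upper bounds of `x` and `-x`. -/
def pmUB (x : Z) : Set Z := upperBounds {x, -x}

/-- Disjointness in an ordered vector space: `{±(x+y)}ᵘ = {±(x−y)}ᵘ`. -/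
def Disj (x y : Z) : Prop :=
  upperBounds {x + y, -(x + y)} = upperBounds {x - y, -(x - y)}

/-- Disjoint complement of a set. -/
def dcomp (M : Set Z) : Set Z := {x : Z | ∀ y ∈ M, Disj x y}

/-- `D` is a linear subspace. -/
def IsSubsp (D : Set Z) : Prop :=
  (0 : Z) ∈ D ∧ (∀ x ∈ D, ∀ y ∈ D, x + y ∈ D) ∧ ∀ (r : ℝ), ∀ x ∈ D, r • x ∈ D

/-- A band is a linear subspace `B` with `Bᵈᵈ = B`. -/
def IsBand (B : Set Z) : Prop := IsSubsp B ∧ dcomp (dcomp B) = B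

/-- `M` is solid: `{±y}ᵘ ⊆ {±x}ᵘ` with `y ∈ M` implies `x ∈ M`. -/
def IsSolid (M : Set Z) : Prop := ∀ x : Z, ∀ y ∈ M, pmUB y ⊆ pmUB x → x ∈ M

/-- An ideal is a solid linear subspace. -/
def IsIdeal (I : Set Z) : Prop := IsSubsp I ∧ IsSolid I

/-- The ideal generated by `S`. -/
def idealGen (S : Set Z) : Set Z := ⋂₀ {I : Set Z | IsIdeal I ∧ S ⊆ I}

/-- The band generated by `S`. -/
def bandGen (S : Set Z) : Set Z := ⋂₀ {B : Set Z | IsBand B ∧ S ⊆ B}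

/-- A subset is directed if any two elements have a common upper bound in it. -/
def IsDirectedSet (D : Set Z) : Prop := ∀ x ∈ D, ∀ y ∈ D, ∃ z ∈ D, x ≤ z ∧ y ≤ z

/-- `D` is order dense in `E` (infima taken within `E`): every `y ∈ E` is the
infimum, computed in `E`, of `{w ∈ D | y ≤ w}`. -/
def OrderDenseIn (D E : Set Z) : Prop :=
  ∀ y ∈ E, y ∈ lowerBounds {w : Z | w ∈ D ∧ y ≤ w} ∧
    ∀ z ∈ E, z ∈ lowerBounds {w : Z | w ∈ D ∧ y ≤ w} → z ≤ y

/-- `D` is majorizing in `E`. -/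
def MajorizingIn (D E : Set Z) : Prop := ∀ y ∈ E, ∃ d ∈ D, y ≤ d

end Defs

/-!
Since `i` is an order embedding, `I` is directed exactly when the linear subspace `S = i '' I`
of `Y` is. If `S` is directed, each `a ∈ S` has an upper bound of `a` and `-a` in `S`, i.e. one
above `|a|`; hence `S` lies in the ideal `{y | ∃ a ∈ S, |y| ≤ a}`, which then contains the ideal
generated by `S` and is majorized by `S`. Conversely, for `a, b ∈ S` the supremum `a ⊔ b` lies
in the ideal generated by `S`, and any element of `S` above it is a common upper bound.
-/

section Subspace

variable {Z : Type*} [AddCommGroup Z] [Module ℝ Z]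

theorem IsSubsp.neg_mem {S : Set Z} (hS : IsSubsp S) {x : Z} (hx : x ∈ S) : -x ∈ S := by
  simpa using hS.2.2 (-1) x hx

theorem IsSubsp.image {W : Type*} [AddCommGroup W] [Module ℝ W] {S : Set W} (hS : IsSubsp S)
    (f : W →ₗ[ℝ] Z) : IsSubsp (f '' S) := by
  refine ⟨⟨0, hS.1, map_zero f⟩, ?_, ?_⟩
  · rintro _ ⟨x, hx, rfl⟩ _ ⟨y, hy, rfl⟩
    exact ⟨x + y, hS.2.1 x hx y hy, map_add f x y⟩
  · rintro r _ ⟨x, hx, rfl⟩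
    exact ⟨r • x, hS.2.2 r x hx, map_smul f r x⟩

end Subspace

section IdealGen

variable {Z : Type*} [AddCommGroup Z] [PartialOrder Z] [Module ℝ Z]

theorem isIdeal_idealGen (S : Set Z) : IsIdeal (idealGen S) := by
  refine ⟨⟨fun J hJ => hJ.1.1.1, fun x hx y hy J hJ => hJ.1.1.2.1 x (hx J hJ) y (hy J hJ),
    fun r x hx J hJ => hJ.1.1.2.2 r x (hx J hJ)⟩, ?_⟩
  exact fun x y hy hxy J hJ => hJ.1.2 x y (hy J hJ) hxy

theorem subset_idealGen (S : Set Z) : S ⊆ idealGen S :=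
  fun _ hx _ hJ => hJ.2 hx

theorem idealGen_subset {S J : Set Z} (hJ : IsIdeal J) (hSJ : S ⊆ J) : idealGen S ⊆ J :=
  fun _ hx => hx J ⟨hJ, hSJ⟩

end IdealGen

theorem isDirectedSet_image_iff {X Z : Type*} [PartialOrder X] [PartialOrder Z] {f : X → Z} (hf : ∀ a b, f a ≤ f b ↔ a ≤ b) (D : Set X) :
    IsDirectedSet (f '' D) ↔ IsDirectedSet D := by
  constructor
  · intro h x hx y hy
    obtain ⟨_, ⟨z, hz, rfl⟩, hxz, hyz⟩ := h _ ⟨x, hx, rfl⟩ _ ⟨y, hy, rfl⟩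
    exact ⟨z, hz, (hf x z).1 hxz, (hf y z).1 hyz⟩
  · rintro h _ ⟨x, hx, rfl⟩ _ ⟨y, hy, rfl⟩
    obtain ⟨z, hz, hxz, hyz⟩ := h x hx y hy
    exact ⟨f z, ⟨z, hz, rfl⟩, (hf x z).2 hxz, (hf y z).2 hyz⟩

theorem LinearMap.le_iff_of_nonneg_iff {X Y : Type*} [AddCommGroup X] [PartialOrder X]
    [AddLeftMono X] [Module ℝ X] [AddCommGroup Y] [PartialOrder Y] [AddLeftMono Y] [Module ℝ Y]
    (i : X →ₗ[ℝ] Y) (hbi : ∀ x : X, 0 ≤ i x ↔ 0 ≤ x) (a b : X) : i a ≤ i b ↔ a ≤ b := by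
  rw [← sub_nonneg, ← map_sub, hbi, sub_nonneg]

theorem abs_sup_le_abs_add_abs {G : Type*} [AddCommGroup G] [Lattice G] [AddLeftMono G]
    (a b : G) : |a ⊔ b| ≤ |a| + |b| := by
  have ha : |a| ≤ |a| + |b| := le_add_of_nonneg_right (abs_nonneg b)
  have hb : |b| ≤ |a| + |b| := le_add_of_nonneg_left (abs_nonneg a)
  refine abs_le'.2 ⟨sup_le ((le_abs_self a).trans ha) ((le_abs_self b).trans hb), ?_⟩
  rw [neg_sup]
  exact inf_le_left.trans ((neg_le_abs a).trans ha)

section Lattice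

variable {Y : Type*} [AddCommGroup Y] [Lattice Y]

theorem mem_pmUB_iff {a w : Y} : w ∈ pmUB a ↔ |a| ≤ w := by
  simp only [pmUB, upperBounds_insert, upperBounds_singleton, mem_inter_iff, mem_Ici]
  exact abs_le'.symm

theorem pmUB_subset_pmUB_iff {a b : Y} : pmUB b ⊆ pmUB a ↔ |a| ≤ |b| :=
  ⟨fun h => mem_pmUB_iff.1 (h (mem_pmUB_iff.2 le_rfl)),
    fun h _ hw => mem_pmUB_iff.2 (h.trans (mem_pmUB_iff.1 hw))⟩

theorem isSolid_iff {M : Set Y} : IsSolid M ↔ ∀ x, ∀ y ∈ M, |x| ≤ |y| → x ∈ M := by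
  simp only [IsSolid, pmUB_subset_pmUB_iff]

end Lattice

theorem abs_smul_le_smul_of_abs_le {R Y : Type*} [Ring R] [LinearOrder R] [IsOrderedRing R]
    [AddCommGroup Y] [Lattice Y] [Module R Y] [PosSMulMono R Y] (r : R) {y a : Y} (h : |y| ≤ a) :
    |r • y| ≤ |r| • a := by
  have key : ∀ z : Y, |z| ≤ a → |(|r|) • z| ≤ |r| • a := fun z hz =>
    abs_le'.2 ⟨smul_le_smul_of_nonneg_left ((le_abs_self z).trans hz) (abs_nonneg r),
      smul_neg |r| z ▸ smul_le_smul_of_nonneg_left ((neg_le_abs z).trans hz) (abs_nonneg r)⟩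
  rcases abs_choice r with hr | hr
  · simpa [hr] using key y h
  · simpa [hr] using key (-y) ((abs_neg y).trans_le h)

section VectorLattice

variable {Y : Type*} [AddCommGroup Y] [Lattice Y] [AddLeftMono Y] [Module ℝ Y]

theorem IsIdeal.abs_mem {J : Set Y} (hJ : IsIdeal J) {a : Y} (ha : a ∈ J) : |a| ∈ J :=
  isSolid_iff.1 hJ.2 _ a ha (abs_abs a).le

theorem IsIdeal.sup_mem {J : Set Y} (hJ : IsIdeal J) {a b : Y} (ha : a ∈ J) (hb : b ∈ J) :
    a ⊔ b ∈ J := by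
  have hsum : |a| + |b| ∈ J := hJ.1.2.1 _ (hJ.abs_mem ha) _ (hJ.abs_mem hb)
  exact isSolid_iff.1 hJ.2 _ _ hsum ((abs_sup_le_abs_add_abs a b).trans (le_abs_self _))

theorem IsSubsp.isIdeal_setOf_abs_le [PosSMulMono ℝ Y] {S : Set Y} (hS : IsSubsp S) :
    IsIdeal {y : Y | ∃ a ∈ S, |y| ≤ a} := by
  refine ⟨⟨⟨0, hS.1, abs_zero.le⟩, ?_, ?_⟩, ?_⟩
  · rintro x ⟨a, ha, hxa⟩ y ⟨b, hb, hyb⟩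
    exact ⟨a + b, hS.2.1 a ha b hb, (abs_add_le x y).trans (add_le_add hxa hyb)⟩
  · rintro r y ⟨a, ha, hya⟩
    exact ⟨|r| • a, hS.2.2 |r| a ha, abs_smul_le_smul_of_abs_le r hya⟩
  · rw [isSolid_iff]
    rintro x y ⟨a, ha, hya⟩ hxy
    exact ⟨a, ha, hxy.trans hya⟩

theorem IsSubsp.isDirectedSet_iff_majorizingIn_idealGen [PosSMulMono ℝ Y] {S : Set Y}
    (hS : IsSubsp S) : IsDirectedSet S ↔ MajorizingIn S (idealGen S) := by
  constructor
  · intro hdir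
    have hS_abs : S ⊆ {y : Y | ∃ a ∈ S, |y| ≤ a} := by
      intro a ha
      obtain ⟨d, hd, had, hnad⟩ := hdir a ha (-a) (hS.neg_mem ha)
      exact ⟨d, hd, abs_le'.2 ⟨had, hnad⟩⟩
    intro y hy
    obtain ⟨a, ha, hya⟩ := idealGen_subset hS.isIdeal_setOf_abs_le hS_abs hy
    exact ⟨a, ha, (le_abs_self y).trans hya⟩
  · intro hmaj a ha b hb
    have hsup : a ⊔ b ∈ idealGen S := (isIdeal_idealGen S).sup_mem
      (subset_idealGen S ha) (subset_idealGen S hb)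
    obtain ⟨d, hd, hd_ge⟩ := hmaj _ hsup
    exact ⟨d, hd, le_sup_left.trans hd_ge, le_sup_right.trans hd_ge⟩

end VectorLattice

theorem stmt_9_general {X Y : Type*} [AddCommGroup X] [PartialOrder X] [CovariantClass X X (· + ·) (· ≤ ·)] [Module ℝ X] [AddCommGroup Y] [Lattice Y] [CovariantClass Y Y (· + ·) (· ≤ ·)] [Module ℝ Y] [PosSMulMono ℝ Y]
    (i : X →ₗ[ℝ] Y) (hbi : ∀ x : X, 0 ≤ i x ↔ 0 ≤ x)
    (I : Set X) (hI : IsIdeal I) :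
    IsDirectedSet I ↔ MajorizingIn (i '' I) (idealGen (i '' I)) := by
  rw [← isDirectedSet_image_iff (i.le_iff_of_nonneg_iff hbi) I]
  exact (hI.1.image i).isDirectedSet_iff_majorizingIn_idealGen

/-- An ideal I in a pre-Riesz space is directed iff i(I) is majorizing in the
ideal generated by i(I) in a vector lattice cover. -/
theorem stmt_9 {X Y : Type*} [AddCommGroup X] [PartialOrder X] [CovariantClass X X (· + ·) (· ≤ ·)] [Module ℝ X] [PosSMulMono ℝ X] [AddCommGroup Y] [Lattice Y] [CovariantClass Y Y (· + ·) (· ≤ ·)] [Module ℝ Y] [PosSMulMono ℝ Y]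
    (i : X →ₗ[ℝ] Y) (hbi : ∀ x : X, 0 ≤ i x ↔ 0 ≤ x)
    (hdense : ∀ y : Y, IsGLB {z : Y | z ∈ Set.range i ∧ y ≤ z} y)
    (I : Set X) (hI : IsIdeal I) :
    IsDirectedSet I ↔ MajorizingIn (i '' I) (idealGen (i '' I)) :=
  stmt_9_general i hbi I hI
end

section
/- Let X be an Archimedean pervasive pre-Riesz space and S ⊆ X₊ non-empty such that sup S exists in X. Then sup S ∈ Sᵈᵈ, i.e., sup S lies in the band generated by S. -/
open Set

/-!
Embed `X` bipositively and order densely into the vector lattice `Y`. Order density lets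
disjointness be computed in `Y`, where the identities `|a + b| ⊔ |a - b| = |a| + |b|` and
`|a + b| ⊓ |a - b| = ||a| - |b||` turn `x ⊥ y` into `|x| ⊓ |y| = 0`. Let `y ⊥ S` and suppose
`m = sup S` is not disjoint from `y`. Pervasiveness gives `x ∈ X` with `0 < x ≤ m ⊓ |y|` in `Y`;
such an `x` is disjoint from every `s ∈ S`, so `s + x = s ⊔ x ≤ m`. Hence `m - x` is an upper
bound of `S`, contradicting `x > 0`.
-/

section LatticeOrderedGroup

variable {α : Type*} [AddCommGroup α] [Lattice α] [AddLeftMono α]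

lemma abs_add_sup_abs_sub (a b : α) : |a + b| ⊔ |a - b| = |a| + |b| := by
  refine le_antisymm (sup_le (abs_add_le a b) ?_) ?_
  · simpa only [abs_neg, ← sub_eq_add_neg] using abs_add_le a (-b)
  · rw [abs.eq_1 a, abs.eq_1 b, add_sup, sup_add, sup_add]
    refine sup_le (sup_le ?_ ?_) (sup_le ?_ ?_)
    · exact le_sup_of_le_left (le_abs_self _)
    · convert le_sup_of_le_right (neg_le_abs (a - b)) using 1
      abel
    · rw [← sub_eq_add_neg]
      exact le_sup_of_le_right (le_abs_self _)
    · rw [← neg_add]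
      exact le_sup_of_le_left (neg_le_abs _)

lemma add_inf_sub_eq_sub_abs (a b : α) : (a + b) ⊓ (a - b) = a - |b| := by
  rw [abs, sub_eq_add_neg, sub_eq_add_neg, ← add_inf, neg_sup, neg_neg, inf_comm]

lemma add_inf_sub_le_abs_abs_sub_abs (a b : α) : (a + b) ⊓ (a - b) ≤ |(|a| - |b|)| := by
  rw [add_inf_sub_eq_sub_abs]
  exact (sub_le_sub_right (le_abs_self a) _).trans (le_abs_self _)

lemma abs_add_inf_abs_sub (a b : α) : |a + b| ⊓ |a - b| = |(|a| - |b|)| := by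
  let : DistribLattice α := AddCommGroup.toDistribLattice α
  refine le_antisymm ?_ (le_inf ?_ (abs_abs_sub_abs_le a b))
  -- by distributivity, each of the four meets has the shape `(c + d) ⊓ (c - d) = c - |d|`
  · rw [abs.eq_1 (a + b), abs.eq_1 (a - b), inf_sup_right, inf_sup_left, inf_sup_left]
    refine sup_le (sup_le ?_ ?_) (sup_le ?_ ?_)
    · exact add_inf_sub_le_abs_abs_sub_abs a b
    · have h := add_inf_sub_le_abs_abs_sub_abs b a
      rw [abs_sub_comm] at h
      convert h using 2 <;> abel
    · have h := add_inf_sub_le_abs_abs_sub_abs (-b) a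
      rw [abs_neg, abs_sub_comm, inf_comm] at h
      convert h using 2 <;> abel
    · have h := add_inf_sub_le_abs_abs_sub_abs (-a) b
      rw [abs_neg, inf_comm] at h
      convert h using 2 <;> abel
  · simpa only [abs_neg, sub_neg_eq_add] using abs_abs_sub_abs_le a (-b)

lemma abs_add_eq_abs_sub_iff (a b : α) : |a + b| = |a - b| ↔ |a| ⊓ |b| = 0 := by
  constructor
  · intro h
    have hsum : |a| + |b| = |(|a| - |b|)| := by
      rw [← abs_add_sup_abs_sub, ← abs_add_inf_abs_sub, h, sup_idem, inf_idem]
    have htwice : |a| ⊓ |b| + |a| ⊓ |b| = 0 := by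
      rw [← two_nsmul, two_nsmul_inf_eq_add_sub_abs_sub, abs_sub_comm, ← hsum, sub_self]
    have hnonneg : 0 ≤ |a| ⊓ |b| := le_inf (abs_nonneg a) (abs_nonneg b)
    exact le_antisymm (htwice ▸ le_add_of_nonneg_left hnonneg) hnonneg
  · intro h
    have hsum : |a| + |b| = |a| ⊔ |b| := by rw [← inf_add_sup, h, zero_add]
    have hdiff : |(|a| - |b|)| = |a| ⊔ |b| := by
      rw [abs_sub_comm, ← sup_sub_inf_eq_abs_sub, h, sub_zero]
    rw [← inf_eq_sup, abs_add_sup_abs_sub, abs_add_inf_abs_sub, hsum, hdiff]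

end LatticeOrderedGroup

lemma eq_of_forall_le_apply_iff {X Y : Type*} [PartialOrder Y] (f : X → Y)
    (hdense : ∀ y : Y, IsGLB {z : Y | z ∈ range f ∧ y ≤ z} y)
    {y₁ y₂ : Y} (h : ∀ u : X, y₁ ≤ f u ↔ y₂ ≤ f u) : y₁ = y₂ := by
  have hsets : {z : Y | z ∈ range f ∧ y₁ ≤ z} = {z : Y | z ∈ range f ∧ y₂ ≤ z} := by
    ext z
    constructor <;> rintro ⟨⟨u, rfl⟩, hu⟩ <;> simp_all
  exact (hdense y₁).unique (hsets ▸ hdense y₂)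

section Embedding

variable {X Y : Type*} [AddCommGroup X] [PartialOrder X] [AddLeftMono X]
  [AddCommGroup Y] [Lattice Y] [AddLeftMono Y]

lemma map_le_map_iff_of_map_nonneg_iff (i : X →+ Y) (hbi : ∀ x : X, 0 ≤ i x ↔ 0 ≤ x)
    {v w : X} : i v ≤ i w ↔ v ≤ w := by
  rw [← sub_nonneg, ← map_sub, hbi, sub_nonneg]

lemma mem_upperBounds_pair_neg_iff (i : X →+ Y) (hbi : ∀ x : X, 0 ≤ i x ↔ 0 ≤ x)
    {a u : X} : u ∈ upperBounds {a, -a} ↔ |i a| ≤ i u := by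
  rw [upperBounds_insert, upperBounds_singleton, mem_inter_iff, mem_Ici, mem_Ici, abs_le',
    ← map_neg, map_le_map_iff_of_map_nonneg_iff i hbi, map_le_map_iff_of_map_nonneg_iff i hbi]

theorem disj_iff_abs_inf_abs_eq_zero (i : X →+ Y) (hbi : ∀ x : X, 0 ≤ i x ↔ 0 ≤ x)
    (hdense : ∀ y : Y, IsGLB {z : Y | z ∈ range i ∧ y ≤ z} y) (x y : X) :
    Disj x y ↔ |i x| ⊓ |i y| = 0 := by
  rw [← abs_add_eq_abs_sub_iff, ← map_add, ← map_sub, Disj]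
  constructor
  · intro h
    refine eq_of_forall_le_apply_iff i hdense fun u => ?_
    rw [← mem_upperBounds_pair_neg_iff i hbi, ← mem_upperBounds_pair_neg_iff i hbi, h]
  · intro h
    ext u
    rw [mem_upperBounds_pair_neg_iff i hbi, mem_upperBounds_pair_neg_iff i hbi, h]

lemma add_le_of_map_inf_eq_zero (i : X →+ Y) (hbi : ∀ x : X, 0 ≤ i x ↔ 0 ≤ x)
    {s x m : X} (hsx : i s ⊓ i x = 0) (hs : s ≤ m) (hx : x ≤ m) : s + x ≤ m := by
  rw [← map_le_map_iff_of_map_nonneg_iff i hbi, map_add, ← inf_add_sup, hsx, zero_add]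
  exact sup_le ((map_le_map_iff_of_map_nonneg_iff i hbi).2 hs)
    ((map_le_map_iff_of_map_nonneg_iff i hbi).2 hx)

theorem disj_of_isLUB_of_forall_disj (i : X →+ Y) (hbi : ∀ x : X, 0 ≤ i x ↔ 0 ≤ x)
    (hdense : ∀ y : Y, IsGLB {z : Y | z ∈ range i ∧ y ≤ z} y)
    (hperv : ∀ y : Y, 0 < y → ∃ x : X, 0 < i x ∧ i x ≤ y)
    {S : Set X} {m y : X} (hne : S.Nonempty) (hpos : ∀ s ∈ S, 0 ≤ s) (hsup : IsLUB S m)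
    (hy : ∀ s ∈ S, Disj y s) : Disj m y := by
  obtain ⟨s₀, hs₀⟩ := hne
  have him : 0 ≤ i m := (hbi m).2 ((hpos s₀ hs₀).trans (hsup.1 hs₀))
  rw [disj_iff_abs_inf_abs_eq_zero i hbi hdense, abs_of_nonneg him]
  by_contra hmy
  obtain ⟨x, hx, hxle⟩ := hperv _ ((le_inf him (abs_nonneg _)).lt_of_ne' hmy)
  have hxS : ∀ s ∈ S, i s ⊓ i x = 0 := fun s hs => by
    have his : 0 ≤ i s := (hbi s).2 (hpos s hs)
    have hys := (disj_iff_abs_inf_abs_eq_zero i hbi hdense y s).1 (hy s hs)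
    rw [abs_of_nonneg his, inf_comm] at hys
    refine le_antisymm ?_ (le_inf his hx.le)
    exact hys ▸ inf_le_inf_left _ (hxle.trans inf_le_right)
  have hxm : x ≤ m := (map_le_map_iff_of_map_nonneg_iff i hbi).1 (hxle.trans inf_le_left)
  have hub : m - x ∈ upperBounds S := fun s hs =>
    le_sub_iff_add_le.2 (add_le_of_map_inf_eq_zero i hbi (hxS s hs) (hsup.1 hs) hxm)
  have hx0 : x ≤ 0 := (le_sub_self_iff m).1 (hsup.2 hub)
  exact hx.not_ge ((map_le_map_iff_of_map_nonneg_iff i hbi).2 hx0 |>.trans_eq (map_zero i))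

end Embedding

theorem stmt_14_general {X Y : Type*} [AddCommGroup X] [PartialOrder X] [CovariantClass X X (· + ·) (· ≤ ·)] [Module ℝ X] [AddCommGroup Y] [Lattice Y] [CovariantClass Y Y (· + ·) (· ≤ ·)] [Module ℝ Y]
    (i : X →ₗ[ℝ] Y) (hbi : ∀ x : X, 0 ≤ i x ↔ 0 ≤ x)
    (hdense : ∀ y : Y, IsGLB {z : Y | z ∈ Set.range i ∧ y ≤ z} y)
    (hperv : ∀ y : Y, 0 < y → ∃ x : X, 0 < i x ∧ i x ≤ y)
    (m : X) (S : Set X) (hne : S.Nonempty) (hpos : ∀ s ∈ S, (0 : X) ≤ s)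
    (hsup : IsLUB S m) : m ∈ dcomp (dcomp S) :=
  fun _ hy => disj_of_isLUB_of_forall_disj i.toAddMonoidHom hbi hdense hperv hne hpos hsup hy

/-- In an Archimedean pervasive pre-Riesz space, the supremum of a non-empty set
S ⊆ X₊ belongs to the band Sᵈᵈ generated by S. -/
theorem stmt_14 {X Y : Type*} [AddCommGroup X] [PartialOrder X] [CovariantClass X X (· + ·) (· ≤ ·)] [Module ℝ X] [PosSMulMono ℝ X] [AddCommGroup Y] [Lattice Y] [CovariantClass Y Y (· + ·) (· ≤ ·)] [Module ℝ Y] [PosSMulMono ℝ Y]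
    (i : X →ₗ[ℝ] Y) (hbi : ∀ x : X, 0 ≤ i x ↔ 0 ≤ x)
    (hdense : ∀ y : Y, IsGLB {z : Y | z ∈ Set.range i ∧ y ≤ z} y)
    (harch : ∀ x y : X, (∀ n : ℕ, n • x ≤ y) → x ≤ 0)
    (hperv : ∀ y : Y, 0 < y → ∃ x : X, 0 < i x ∧ i x ≤ y)
    (m : X) (S : Set X) (hne : S.Nonempty) (hpos : ∀ s ∈ S, (0 : X) ≤ s)
    (hsup : IsLUB S m) : m ∈ dcomp (dcomp S) :=
  stmt_14_general i hbi hdense hperv m S hne hpos hsup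
end

section
/- Let X be an Archimedean pervasive pre-Riesz space with Dedekind completion X^δ, let I ⊆ X be a directed ideal, and let Î be the smallest extension ideal of I in X^δ. Then Î is Dedekind complete and i(I) is order dense in Î, i.e., (Î, i|_I) is the Dedekind completion of I. -/
open Set

/-!
The set `D` of all `y` with `±y ≤ i x` for some `x ∈ I` is an ideal of `X^δ`, and directedness
of `I` gives `i⁻¹(D) = I`; so `Î ⊆ D` by minimality. Dedekind completeness of `Î` is inherited
from `X^δ`, since a supremum in `X^δ` of a subset of `Î` lies between two elements of `Î`.
For order density, let `y ∈ Î` and let `z ∈ Î` be a lower bound of `{i x | x ∈ I, y ≤ i x}`.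
If `z ≰ y`, pervasiveness yields `u ∈ X` with `0 < i u ≤ z ⊔ y - y`; then `x ↦ x - u` maps the
set `{x ∈ I | y ≤ i x}` into itself, so `n • u ≤ 2 x₀` for all `n`, contradicting Archimedeanity.
-/

section OrderedModule

variable {Z : Type*} [AddCommGroup Z] [PartialOrder Z]

lemma mem_pmUB {a z : Z} : z ∈ pmUB a ↔ a ≤ z ∧ -a ≤ z := by
  simp [pmUB, upperBounds_insert]

def DedekindCompleteIn (E : Set Z) : Prop :=
  ∀ A : Set Z, A ⊆ E → A.Nonempty → (∃ b ∈ E, b ∈ upperBounds A) →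
    ∃ m ∈ E, m ∈ upperBounds A ∧ ∀ b ∈ E, b ∈ upperBounds A → m ≤ b

end OrderedModule

namespace IsSubsp

variable {Z : Type*} [AddCommGroup Z] [Module ℝ Z] {D : Set Z}

lemma neg_mem_s18 (hD : IsSubsp D) {x : Z} (hx : x ∈ D) : -x ∈ D := by
  simpa using hD.2.2 (-1) x hx

lemma sub_mem (hD : IsSubsp D) {x y : Z} (hx : x ∈ D) (hy : y ∈ D) : x - y ∈ D := by
  simpa [sub_eq_add_neg] using hD.2.1 x hx _ (hD.neg_mem_s18 hy)

end IsSubsp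

section VectorLattice

variable {Y : Type*} [AddCommGroup Y] [Lattice Y]

lemma pmUB_eq_Ici_abs (a : Y) : pmUB a = Ici |a| := by
  ext
  simp [mem_pmUB, abs_le']

lemma IsSolid.mem_of_abs_le {M : Set Y} (hM : IsSolid M) {x y : Y} (hy : y ∈ M)
    (h : |x| ≤ |y|) : x ∈ M :=
  hM x y hy (by simpa only [pmUB_eq_Ici_abs] using Ici_subset_Ici.2 h)

variable [AddLeftMono Y] [Module ℝ Y]

lemma IsIdeal.mem_of_le_of_le {J : Set Y} (hJ : IsIdeal J) {a m b : Y} (ha : a ∈ J)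
    (hb : b ∈ J) (ham : a ≤ m) (hmb : m ≤ b) : m ∈ J := by
  have abs_mem : ∀ c ∈ J, |c| ∈ J := fun c hc => hJ.2.mem_of_abs_le hc (abs_abs c).le
  refine hJ.2.mem_of_abs_le (hJ.1.2.1 _ (abs_mem a ha) _ (abs_mem b hb)) ?_
  refine (abs_le'.2 ⟨?_, ?_⟩).trans (le_abs_self _)
  · calc m ≤ b := hmb
      _ ≤ |b| := le_abs_self b
      _ ≤ |a| + |b| := le_add_of_nonneg_left (abs_nonneg a)
  · calc -m ≤ -a := neg_le_neg_iff.2 ham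
      _ ≤ |a| := neg_le_abs a
      _ ≤ |a| + |b| := le_add_of_nonneg_right (abs_nonneg b)

theorem IsIdeal.dedekindCompleteIn
    (hded : ∀ A : Set Y, A.Nonempty → BddAbove A → ∃ m : Y, IsLUB A m)
    {J : Set Y} (hJ : IsIdeal J) : DedekindCompleteIn J := by
  rintro A hAJ ⟨a, ha⟩ ⟨b, hbJ, hb⟩
  obtain ⟨m, hm⟩ := hded A ⟨a, ha⟩ ⟨b, hb⟩
  exact ⟨m, hJ.mem_of_le_of_le (hAJ ha) hbJ (hm.1 ha) (hm.2 hb), hm.1, fun b' _ hb' => hm.2 hb'⟩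

end VectorLattice

section Embedding

variable {X Y : Type*} [AddCommGroup X] [Module ℝ X]
  [AddCommGroup Y] [PartialOrder Y] [Module ℝ Y] {i : X →ₗ[ℝ] Y} {I : Set X}

lemma map_le_map_iff_of_nonneg_iff [PartialOrder X] [AddLeftMono X] [AddLeftMono Y]
    (hbi : ∀ x : X, 0 ≤ i x ↔ 0 ≤ x) {a b : X} : i a ≤ i b ↔ a ≤ b := by
  rw [← sub_nonneg, ← map_sub, hbi, sub_nonneg]

variable (i I) in
def dominatedBy : Set Y := {y : Y | ∃ x ∈ I, y ≤ i x ∧ -y ≤ i x}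

lemma neg_mem_dominatedBy {y : Y} (hy : y ∈ dominatedBy i I) : -y ∈ dominatedBy i I := by
  obtain ⟨x, hx, h₁, h₂⟩ := hy
  exact ⟨x, hx, h₂, by rwa [neg_neg]⟩

lemma isIdeal_dominatedBy [AddLeftMono Y] [PosSMulMono ℝ Y] (hI : IsSubsp I) :
    IsIdeal (dominatedBy i I) := by
  have nonneg_smul_mem :
      ∀ {r : ℝ}, 0 ≤ r → ∀ y ∈ dominatedBy i I, r • y ∈ dominatedBy i I := by
    rintro r hr y ⟨x, hx, h₁, h₂⟩
    refine ⟨r • x, hI.2.2 r x hx, ?_, ?_⟩ <;> rw [map_smul]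
    · exact smul_le_smul_of_nonneg_left h₁ hr
    · rw [← smul_neg]
      exact smul_le_smul_of_nonneg_left h₂ hr
  refine ⟨⟨⟨0, hI.1, by simp⟩, ?_, fun r y hy => ?_⟩, ?_⟩
  · rintro a ⟨xa, hxa, ha₁, ha₂⟩ b ⟨xb, hxb, hb₁, hb₂⟩
    refine ⟨xa + xb, hI.2.1 _ hxa _ hxb, ?_, ?_⟩ <;> rw [map_add]
    · exact add_le_add ha₁ hb₁
    · rw [neg_add]
      exact add_le_add ha₂ hb₂
  · rcases le_total 0 r with hr | hr
    · exact nonneg_smul_mem hr y hy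
    · rw [← neg_smul_neg]
      exact nonneg_smul_mem (neg_nonneg.2 hr) _ (neg_mem_dominatedBy hy)
  · rintro a b ⟨x, hx, h₁, h₂⟩ hsub
    exact ⟨x, hx, mem_pmUB.1 (hsub (mem_pmUB.2 ⟨h₁, h₂⟩))⟩

lemma preimage_dominatedBy [PartialOrder X] [AddLeftMono X] [AddLeftMono Y]
    (hbi : ∀ x : X, 0 ≤ i x ↔ 0 ≤ x) (hI : IsIdeal I) (hdir : IsDirectedSet I) :
    i ⁻¹' dominatedBy i I = I := by
  ext x
  constructor
  · rintro ⟨w, hw, h₁, h₂⟩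
    rw [← map_neg] at h₂
    rw [map_le_map_iff_of_nonneg_iff hbi] at h₁ h₂
    refine hI.2 x w hw fun t ht => ?_
    exact mem_pmUB.2 ⟨h₁.trans (mem_pmUB.1 ht).1, h₂.trans (mem_pmUB.1 ht).1⟩
  · intro hx
    obtain ⟨w, hw, h₁, h₂⟩ := hdir x hx (-x) (hI.1.neg_mem_s18 hx)
    refine ⟨w, hw, ?_, ?_⟩
    · exact (map_le_map_iff_of_nonneg_iff hbi).2 h₁
    · rw [← map_neg]
      exact (map_le_map_iff_of_nonneg_iff hbi).2 h₂

end Embedding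

section Density

variable {X Y : Type*} [AddCommGroup X] [PartialOrder X] [AddLeftMono X] [Module ℝ X]
  [AddCommGroup Y] [Lattice Y] [AddLeftMono Y] [Module ℝ Y] {i : X →ₗ[ℝ] Y} {I : Set X}

theorem le_of_forall_le_map_of_mem_dominatedBy (hbi : ∀ x : X, 0 ≤ i x ↔ 0 ≤ x)
    (harch : ∀ x y : X, (∀ n : ℕ, n • x ≤ y) → x ≤ 0)
    (hperv : ∀ y : Y, 0 < y → ∃ x : X, 0 < i x ∧ i x ≤ y)
    (hI : IsIdeal I) (hdir : IsDirectedSet I) {y z : Y} (hy : y ∈ dominatedBy i I)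
    (hz : ∀ x ∈ I, y ≤ i x → z ≤ i x) : z ≤ y := by
  obtain ⟨x₀, hx₀, hyx₀, hnegy⟩ := hy
  by_contra hzy
  obtain ⟨u, hu₀, hu⟩ := hperv (z ⊔ y - y) (sub_pos.2 (right_lt_sup.2 hzy))
  have map_le_sub : ∀ x ∈ I, y ≤ i x → i u ≤ i x - y := fun x hx hyx =>
    hu.trans (sub_le_sub_right (sup_le (hz x hx hyx) hyx) y)
  have sub_le_double : i x₀ - y ≤ i (x₀ + x₀) := by
    rw [map_add, sub_eq_add_neg]
    exact add_le_add_right hnegy _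
  have hu_mem : u ∈ I := by
    have hu_le := (map_le_sub x₀ hx₀ hyx₀).trans sub_le_double
    rw [← preimage_dominatedBy hbi hI hdir]
    exact ⟨x₀ + x₀, hI.1.2.1 _ hx₀ _ hx₀, hu_le,
      (neg_nonpos.2 hu₀.le).trans (hu₀.le.trans hu_le)⟩
  have sub_nsmul_mem : ∀ n : ℕ, x₀ - n • u ∈ I ∧ y ≤ i (x₀ - n • u) := by
    intro n
    induction n with
    | zero => simpa using ⟨hx₀, hyx₀⟩
    | succ n ih =>
      rw [succ_nsmul, ← sub_sub, map_sub]
      exact ⟨hI.1.sub_mem ih.1 hu_mem, le_sub_comm.1 (map_le_sub _ ih.1 ih.2)⟩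
  have hu_nonpos : u ≤ 0 := harch u (x₀ + x₀) fun n => by
    have hle := (sub_nsmul_mem n).2
    rw [map_sub, map_nsmul] at hle
    rw [← map_le_map_iff_of_nonneg_iff hbi, map_nsmul]
    exact (le_sub_comm.1 hle).trans sub_le_double
  exact hu₀.ne' (by rw [le_antisymm hu_nonpos ((hbi u).1 hu₀.le), map_zero])

theorem orderDenseIn_image_of_subset_dominatedBy (hbi : ∀ x : X, 0 ≤ i x ↔ 0 ≤ x)
    (harch : ∀ x y : X, (∀ n : ℕ, n • x ≤ y) → x ≤ 0)
    (hperv : ∀ y : Y, 0 < y → ∃ x : X, 0 < i x ∧ i x ≤ y)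
    (hI : IsIdeal I) (hdir : IsDirectedSet I) {E : Set Y} (hE : E ⊆ dominatedBy i I) :
    OrderDenseIn (i '' I) E := fun _ hy =>
  ⟨fun _ hw => hw.2, fun _ _ hz => le_of_forall_le_map_of_mem_dominatedBy hbi harch hperv hI hdir
    (hE hy) fun x hx hyx => hz ⟨⟨x, hx, rfl⟩, hyx⟩⟩

end Density

theorem stmt_18_general {X Y : Type*} [AddCommGroup X] [PartialOrder X] [CovariantClass X X (· + ·) (· ≤ ·)] [Module ℝ X] [AddCommGroup Y] [Lattice Y] [CovariantClass Y Y (· + ·) (· ≤ ·)] [Module ℝ Y] [PosSMulMono ℝ Y]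
    (i : X →ₗ[ℝ] Y) (hbi : ∀ x : X, 0 ≤ i x ↔ 0 ≤ x)
    (harch : ∀ x y : X, (∀ n : ℕ, n • x ≤ y) → x ≤ 0)
    (hperv : ∀ y : Y, 0 < y → ∃ x : X, 0 < i x ∧ i x ≤ y)
    (hded : ∀ A : Set Y, A.Nonempty → BddAbove A → ∃ m : Y, IsLUB A m)
    (I : Set X) (hI : IsIdeal I) (hdir : IsDirectedSet I)
    (Ihat : Set Y) (hIhat : IsIdeal Ihat)
    (hsmall : ∀ J : Set Y, IsIdeal J → i ⁻¹' J = I → Ihat ⊆ J) :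
    (∀ A : Set Y, A ⊆ Ihat → A.Nonempty → (∃ b ∈ Ihat, b ∈ upperBounds A) →
      ∃ m ∈ Ihat, m ∈ upperBounds A ∧ ∀ b ∈ Ihat, b ∈ upperBounds A → m ≤ b) ∧
    OrderDenseIn (i '' I) Ihat := by
  have hIhat_sub : Ihat ⊆ dominatedBy i I :=
    hsmall _ (isIdeal_dominatedBy hI.1) (preimage_dominatedBy hbi hI hdir)
  exact ⟨hIhat.dedekindCompleteIn hded,
    orderDenseIn_image_of_subset_dominatedBy hbi harch hperv hI hdir hIhat_sub⟩

/-- For a directed ideal I in an Archimedean pervasive pre-Riesz space and its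
smallest extension ideal Î in the Dedekind completion: Î is Dedekind complete
(suprema within Î of non-empty subsets bounded above in Î exist) and i(I) is
order dense in Î, i.e. Î is the Dedekind completion of I. -/
theorem stmt_18 {X Y : Type*} [AddCommGroup X] [PartialOrder X] [CovariantClass X X (· + ·) (· ≤ ·)] [Module ℝ X] [PosSMulMono ℝ X] [AddCommGroup Y] [Lattice Y] [CovariantClass Y Y (· + ·) (· ≤ ·)] [Module ℝ Y] [PosSMulMono ℝ Y]
    (i : X →ₗ[ℝ] Y) (hbi : ∀ x : X, 0 ≤ i x ↔ 0 ≤ x)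
    (hdense : ∀ y : Y, IsGLB {z : Y | z ∈ Set.range i ∧ y ≤ z} y)
    (harch : ∀ x y : X, (∀ n : ℕ, n • x ≤ y) → x ≤ 0)
    (hperv : ∀ y : Y, 0 < y → ∃ x : X, 0 < i x ∧ i x ≤ y)
    (hded : ∀ A : Set Y, A.Nonempty → BddAbove A → ∃ m : Y, IsLUB A m)
    (I : Set X) (hI : IsIdeal I) (hdir : IsDirectedSet I)
    (Ihat : Set Y) (hIhat : IsIdeal Ihat) (hext : i ⁻¹' Ihat = I)
    (hsmall : ∀ J : Set Y, IsIdeal J → i ⁻¹' J = I → Ihat ⊆ J) :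
    (∀ A : Set Y, A ⊆ Ihat → A.Nonempty → (∃ b ∈ Ihat, b ∈ upperBounds A) →
      ∃ m ∈ Ihat, m ∈ upperBounds A ∧ ∀ b ∈ Ihat, b ∈ upperBounds A → m ≤ b) ∧
    OrderDenseIn (i '' I) Ihat :=
  stmt_18_general i hbi harch hperv hded I hI hdir Ihat hIhat hsmall
end
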